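/- arXiv:0902.3860 — 2 statements merged into one kernel-verified Lean document; each statement's English description precedes it below -/
import Mathlib

section
/- Let Γ be a distance-regular graph with diameter 3 and valency k whose second largest eigenvalue θ₁ equals a₃ (a Shilla graph). Then k = (a₃ - a₁)·a₃; in particular a₃ divides k. -/
open Finset SimpleGraph

/-- `G` is a distance-regular graph with diameter `D` and intersection numbers
`b i`, `c i`, `a i` (so valency `k = b 0` and `a i = k - b i - c i`). -/
structure IsDRG {V : Type*} [Fintype V] (G : SimpleGraph V) (D : ℕ)
    (b c a : ℕ → ℕ) : Prop where
  connected : G.Connected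
  le_diam : ∀ x y : V, G.dist x y ≤ D
  exists_diam : ∃ x y : V, G.dist x y = D
  card_b : ∀ i, i ≤ D → ∀ x y : V, G.dist x y = i →
      Nat.card {z : V | G.Adj y z ∧ G.dist x z = i + 1} = b i
  card_c : ∀ i, i ≤ D → ∀ x y : V, G.dist x y = i →
      Nat.card {z : V | G.Adj y z ∧ G.dist x z = i - 1} = c i
  card_a : ∀ i, i ≤ D → ∀ x y : V, G.dist x y = i →
      Nat.card {z : V | G.Adj y z ∧ G.dist x z = i} = a i

/-- `θ` is an eigenvalue of the adjacency matrix of `G`. -/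
def IsEig {V : Type*} [Fintype V] [DecidableEq V] (G : SimpleGraph V)
    [DecidableRel G.Adj] (θ : ℝ) : Prop :=
  ∃ v : V → ℝ, v ≠ 0 ∧ (G.adjMatrix ℝ).mulVec v = θ • v

/-- `θ` is the second largest eigenvalue of `G` (`k` being the largest). -/
def IsSecondLargestEig {V : Type*} [Fintype V] [DecidableEq V] (G : SimpleGraph V)
    [DecidableRel G.Adj] (k θ : ℝ) : Prop :=
  IsEig G θ ∧ θ < k ∧ ∀ η : ℝ, IsEig G η → η ≠ k → η ≤ θ

/-- `θ` is the smallest eigenvalue of `G`. -/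
def IsSmallestEig {V : Type*} [Fintype V] [DecidableEq V] (G : SimpleGraph V)
    [DecidableRel G.Adj] (θ : ℝ) : Prop :=
  IsEig G θ ∧ ∀ η : ℝ, IsEig G η → θ ≤ η

/-- The multiplicity of `θ` as an eigenvalue of the adjacency matrix of `G`. -/
noncomputable def eigMult {V : Type*} [Fintype V] [DecidableEq V] (G : SimpleGraph V)
    [DecidableRel G.Adj] (θ : ℝ) : ℕ :=
  Module.finrank ℝ ↥(Module.End.eigenspace (Matrix.toLin' (G.adjMatrix ℝ)) θ)

/-- A Shilla distance-regular graph: diameter `3` and second largest eigenvalue `a 3`. -/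
structure IsShilla {V : Type*} [Fintype V] [DecidableEq V] (G : SimpleGraph V)
    [DecidableRel G.Adj] (b c a : ℕ → ℕ) : Prop where
  drg : IsDRG G 3 b c a
  second : IsSecondLargestEig G (b 0) ((a 3 : ℝ))

set_option linter.unusedSectionVars false

lemma natCard_setOf {V : Type*} [Fintype V] (p : V → Prop) [DecidablePred p] :
    Nat.card {y : V | p y} = (univ.filter p).card := by
  simp [Nat.card_eq_fintype_card, Fintype.card_subtype]

lemma exists_adj_dist {V : Type*} (G : SimpleGraph V) (hconn : G.Connected) {x y : V} {n : ℕ}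
    (h : G.dist x y = n + 1) : ∃ z, G.Adj x z ∧ G.dist z y = n := by
  obtain ⟨p, hp⟩ := hconn.exists_walk_length_eq_dist x y
  rw [h] at hp
  cases p with
  | nil => simp at hp
  | cons hadj q =>
    rename_i w
    refine ⟨w, hadj, le_antisymm ?_ ?_⟩
    · simpa using (SimpleGraph.dist_le q).trans (by simp at hp; omega)
    · have h1 : G.dist x w = 1 := SimpleGraph.dist_eq_one_iff_adj.mpr hadj
      have := hconn.dist_triangle (u := x) (v := w) (w := y)
      omega

theorem stmt6_aux {V : Type*} [Fintype V] [DecidableEq V] (G : SimpleGraph V)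
    [DecidableRel G.Adj] (b c a : ℕ → ℕ) (hdrg : IsDRG G 3 b c a)
    (heig : ∃ v : V → ℝ, v ≠ 0 ∧ (G.adjMatrix ℝ).mulVec v = ((a 3 : ℝ)) • v) :
    (b 0 : ℤ) = ((a 3 : ℤ) - a 1) * a 3 ∧ (a 3 : ℤ) ∣ (b 0 : ℤ) := by
  classical
  obtain ⟨v, hv0, hAv⟩ := heig
  obtain ⟨x, hx⟩ : ∃ x, v x ≠ 0 := by
    by_contra h; push_neg at h; exact hv0 (funext h)
  have hconn := hdrg.connected
  have hv : ∀ y : V, ∑ z ∈ G.neighborFinset y, v z = (a 3 : ℝ) * v y := by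
    intro y
    have := congrFun hAv y
    simpa using this
  set Dset : ℕ → Finset V := fun i => univ.filter (fun y => G.dist x y = i) with hDset
  set S : ℕ → ℝ := fun i => ∑ y ∈ Dset i, v y with hS
  set N : ℕ → V → ℕ := fun i z => (univ.filter (fun y => G.Adj z y ∧ G.dist x y = i)).card
    with hN
  -- main recursion setup
  have key : ∀ i : ℕ, (a 3 : ℝ) * S i = ∑ j ∈ Finset.range 4, ∑ z ∈ Dset j, (N i z : ℝ) * v z := by
    intro i
    have e1 : (a 3 : ℝ) * S i = ∑ z : V, (N i z : ℝ) * v z := by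
      calc (a 3 : ℝ) * S i = ∑ y ∈ Dset i, (a 3 : ℝ) * v y := by simp only [hS]; rw [Finset.mul_sum]
        _ = ∑ y ∈ Dset i, ∑ z ∈ G.neighborFinset y, v z :=
            Finset.sum_congr rfl fun y _ => (hv y).symm
        _ = ∑ y ∈ Dset i, ∑ z : V, (if G.Adj y z then v z else 0) := by
            refine Finset.sum_congr rfl fun y _ => ?_
            rw [neighborFinset_eq_filter, Finset.sum_filter]
        _ = ∑ z : V, ∑ y ∈ Dset i, (if G.Adj y z then v z else 0) := Finset.sum_comm
        _ = ∑ z : V, (N i z : ℝ) * v z := by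
            refine Finset.sum_congr rfl fun z _ => ?_
            rw [Finset.sum_ite, Finset.sum_const, Finset.sum_const_zero, add_zero,
              nsmul_eq_mul]
            have hfeq : (Dset i).filter (fun y => G.Adj y z)
                = univ.filter (fun y => G.Adj z y ∧ G.dist x y = i) := by
              ext y
              simp only [hDset, Finset.mem_filter, Finset.mem_univ, true_and]
              constructor
              · rintro ⟨h1, h2⟩; exact ⟨h2.symm, h1⟩
              · rintro ⟨h1, h2⟩; exact ⟨h2, h1.symm⟩
            simp only [hN, hfeq]
    rw [e1]
    rw [← Finset.sum_fiberwise_of_maps_to (g := fun z => G.dist x z)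
      (fun z _ => Finset.mem_range.mpr (Nat.lt_succ_of_le (hdrg.le_diam x z)))]
  have hclass : ∀ (i j m : ℕ), (∀ z : V, G.dist x z = j → N i z = m) →
      ∑ z ∈ Dset j, (N i z : ℝ) * v z = (m : ℝ) * S j := by
    intro i j m h
    rw [hS, Finset.mul_sum]
    refine Finset.sum_congr rfl fun z hz => ?_
    rw [h z (by simpa [hDset] using hz)]
  -- translate card_* to N
  have hNnat : ∀ (i : ℕ) (z : V),
      Nat.card {y : V | G.Adj z y ∧ G.dist x y = i} = N i z := fun i z =>
    natCard_setOf _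
  -- far: count is 0 when |i - j| ≥ 2
  have hfar : ∀ (i j : ℕ), i + 2 ≤ j ∨ j + 2 ≤ i → ∀ z : V, G.dist x z = j → N i z = 0 := by
    intro i j hij z hz
    rw [hN]
    simp only [Finset.card_eq_zero, Finset.filter_eq_empty_iff]
    rintro y - ⟨hadj, hdy⟩
    have h1 : G.dist z y = 1 := SimpleGraph.dist_eq_one_iff_adj.mpr hadj
    have h2 : G.dist y z = 1 := SimpleGraph.dist_eq_one_iff_adj.mpr hadj.symm
    have t1 := hconn.dist_triangle (u := x) (v := z) (w := y)
    have t2 := hconn.dist_triangle (u := x) (v := y) (w := z)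
    omega
  -- D 0 = {x}
  have hD0 : Dset 0 = {x} := by
    rw [hDset]
    ext y
    simp [hconn.dist_eq_zero_iff, eq_comm]
  have hS0 : S 0 = v x := by simp only [hS]; rw [hD0, Finset.sum_singleton]
  -- equations
  have E0 : (a 3 : ℝ) * S 0 = S 1 := by
    conv_lhs => rw [key 0]
    have h0 : ∀ z : V, G.dist x z = 0 → N 0 z = 0 := by
      intro z hz
      have hzx : z = x := (hconn.dist_eq_zero_iff.mp hz).symm
      subst hzx
      rw [hN]
      simp only [Finset.card_eq_zero, Finset.filter_eq_empty_iff]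
      rintro y - ⟨hadj, hdy⟩
      exact G.ne_of_adj hadj ((hconn.dist_eq_zero_iff.mp hdy).symm).symm
    have h1 : ∀ z : V, G.dist x z = 1 → N 0 z = 1 := by
      intro z hz
      simp only [hN]
      have hadj : G.Adj x z := SimpleGraph.dist_eq_one_iff_adj.mp hz
      rw [show (univ.filter (fun y => G.Adj z y ∧ G.dist x y = 0)) = {x} from ?_]
      · simp
      · ext y
        simp only [Finset.mem_filter, Finset.mem_univ, true_and, Finset.mem_singleton]
        constructor
        · rintro ⟨-, hd⟩; exact (hconn.dist_eq_zero_iff.mp hd).symm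
        · rintro rfl; exact ⟨hadj.symm, SimpleGraph.dist_self⟩
    simp only [Finset.sum_range_succ, Finset.range_zero, Finset.sum_empty, zero_add]
    rw [hclass 0 0 0 h0, hclass 0 1 1 h1, hclass 0 2 0 (hfar 0 2 (by omega)),
      hclass 0 3 0 (hfar 0 3 (by omega))]
    push_cast
    ring
  have E1 : (a 3 : ℝ) * S 1 = (b 0 : ℝ) * S 0 + (a 1 : ℝ) * S 1 + (c 2 : ℝ) * S 2 := by
    conv_lhs => rw [key 1]
    have h0 : ∀ z : V, G.dist x z = 0 → N 1 z = b 0 := by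
      intro z hz
      rw [← hNnat 1 z, ← hdrg.card_b 0 (by omega) x z hz]
    have h1 : ∀ z : V, G.dist x z = 1 → N 1 z = a 1 := by
      intro z hz
      rw [← hNnat 1 z, ← hdrg.card_a 1 (by omega) x z hz]
    have h2 : ∀ z : V, G.dist x z = 2 → N 1 z = c 2 := by
      intro z hz
      rw [← hNnat 1 z, ← hdrg.card_c 2 (by omega) x z hz]
    simp only [Finset.sum_range_succ, Finset.range_zero, Finset.sum_empty, zero_add]
    rw [hclass 1 0 (b 0) h0, hclass 1 1 (a 1) h1, hclass 1 2 (c 2) h2,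
      hclass 1 3 0 (hfar 1 3 (by omega))]
    push_cast
    ring
  have E3 : (a 3 : ℝ) * S 3 = (b 2 : ℝ) * S 2 + (a 3 : ℝ) * S 3 := by
    conv_lhs => rw [key 3]
    have h2 : ∀ z : V, G.dist x z = 2 → N 3 z = b 2 := by
      intro z hz
      rw [← hNnat 3 z, ← hdrg.card_b 2 (by omega) x z hz]
    have h3 : ∀ z : V, G.dist x z = 3 → N 3 z = a 3 := by
      intro z hz
      rw [← hNnat 3 z, ← hdrg.card_a 3 (by omega) x z hz]
    simp only [Finset.sum_range_succ, Finset.range_zero, Finset.sum_empty, zero_add]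
    rw [hclass 3 0 0 (hfar 3 0 (by omega)), hclass 3 1 0 (hfar 3 1 (by omega)),
      hclass 3 2 (b 2) h2, hclass 3 3 (a 3) h3]
    push_cast
    ring
  -- b 2 ≠ 0
  obtain ⟨x0, y0, hxy⟩ := hdrg.exists_diam
  have h3 : G.dist y0 x0 = 2 + 1 := by rw [SimpleGraph.dist_comm]; exact hxy
  obtain ⟨w, hwadj, hw⟩ := exists_adj_dist G hconn h3
  have hb2 : b 2 ≠ 0 := by
    rw [← hdrg.card_b 2 (by omega) x0 w (by rw [SimpleGraph.dist_comm]; exact hw)]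
    have hmem : y0 ∈ {z : V | G.Adj w z ∧ G.dist x0 z = 3} := ⟨hwadj.symm, hxy⟩
    rw [Nat.card_ne_zero]
    exact ⟨⟨y0, hmem⟩, inferInstance⟩
  -- finish
  have hS2 : S 2 = 0 := by
    have : (b 2 : ℝ) * S 2 = 0 := by linarith
    have hb2' : (b 2 : ℝ) ≠ 0 := Nat.cast_ne_zero.mpr hb2
    exact (mul_eq_zero.mp this).resolve_left hb2'
  have hS1 : S 1 = (a 3 : ℝ) * v x := by rw [← E0, hS0]
  have hfin : (a 3 : ℝ) * (a 3 : ℝ) = (a 1 : ℝ) * (a 3 : ℝ) + (b 0 : ℝ) := by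
    rw [hS1, hS2, hS0] at E1
    have : ((a 3 : ℝ) * (a 3 : ℝ) - (a 1 : ℝ) * (a 3 : ℝ) - (b 0 : ℝ)) * v x = 0 := by
      ring_nf; ring_nf at E1; linarith
    have := (mul_eq_zero.mp this).resolve_right hx
    linarith
  have hZ : (a 3 : ℤ) * a 3 = (a 1 : ℤ) * a 3 + b 0 := by exact_mod_cast hfin
  constructor
  · linarith [hZ, sub_mul ((a 3 : ℤ)) ((a 1 : ℤ)) ((a 3 : ℤ))]
  · exact ⟨(a 3 : ℤ) - a 1, by linarith [mul_comm ((a 3 : ℤ) - a 1) ((a 3 : ℤ)), sub_mul ((a 3 : ℤ)) ((a 1 : ℤ)) ((a 3 : ℤ))]⟩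

/-- For a Shilla distance-regular graph, `k = (a₃ - a₁)·a₃`; in particular `a₃ ∣ k`. -/
theorem stmt6 {V : Type*} [Fintype V] [DecidableEq V] (G : SimpleGraph V)
    [DecidableRel G.Adj] (b c a : ℕ → ℕ) (hG : IsShilla G b c a) :
    (b 0 : ℤ) = ((a 3 : ℤ) - a 1) * a 3 ∧ (a 3 : ℤ) ∣ (b 0 : ℤ) :=
  stmt6_aux G b c a hG.drg hG.second.1
end

section
/- Let Γ be a distance-regular graph of diameter 3 with c₂ = 1 whose second largest eigenvalue equals a₃ and with b(Γ) = a₃ - a₁ = 2 (so k = 2a₃). Then a₃ ∈ {2, 3}; i.e., (a₁+1) divides k and a₃ ≤ 3. -/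
open Finset SimpleGraph

/-!
Since `c₂ = 1`, two neighbours of `x` with a common neighbour other than `x` are adjacent, so
"equal or adjacent" is an equivalence relation on `Γ(x)` whose classes have `a₁ + 1` elements;
hence `a₁ + 1 ∣ k`.

Let `v` be an eigenvector of `A` for `θ = a₃` and apply the recurrence
`A_i A = b_{i-1} A_{i-1} + a_i A_i + c_{i+1} A_{i+1}` for the distance matrices `A_i` to `v`.
For `i = 3` it reads `θ A₃v = b₂ A₂v + a₃ A₃v`, so `A₂v = 0` as `b₂ ≠ 0`; for `i = 1` it
then reads `θ² v = k v + a₁ θ v`, so `k = a₃ (a₃ - a₁) = 2 (a₁ + 2)`.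
Together, `a₁ + 1 ∣ 2 (a₁ + 1) + 2`, so `a₁ ≤ 1`.
-/

open Matrix

theorem Setoid.dvd_natCard_of_forall_natCard_class_eq {α : Type*} [Finite α] (s : Setoid α)
    {m : ℕ} (h : ∀ x, Nat.card {y // s x y} = m) : m ∣ Nat.card α := by
  classical
  have : Fintype α := Fintype.ofFinite α
  rw [← Nat.card_congr (Equiv.sigmaFiberEquiv (Quotient.mk s)), Nat.card_sigma]
  refine Finset.dvd_sum fun q _ => ?_
  induction q using Quotient.inductionOn with
  | h x =>
    have e : {y // Quotient.mk s y = Quotient.mk s x} ≃ {y // s x y} :=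
      Equiv.subtypeEquivRight fun y => Quotient.eq.trans ⟨s.symm, s.symm⟩
    rw [← h x, Nat.card_congr e]

namespace SimpleGraph

variable {V : Type*} {G : SimpleGraph V}

noncomputable def distMatrix (G : SimpleGraph V) (R : Type*) [Zero R] [One R] (i : ℕ) :
    Matrix V V R :=
  Matrix.of fun x z => if G.dist x z = i then 1 else 0

theorem distMatrix_one {R : Type*} [Zero R] [One R] [DecidableRel G.Adj] :
    G.distMatrix R 1 = G.adjMatrix R := by
  ext x z
  simp [distMatrix, adjMatrix_apply]

theorem distMatrix_zero {R : Type*} [Zero R] [One R] [DecidableEq V] (hG : G.Connected) :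
    G.distMatrix R 0 = 1 := by
  ext x z
  simp [distMatrix, Matrix.one_apply, hG.dist_eq_zero_iff]

theorem distMatrix_mul_adjMatrix_apply [Fintype V] {R : Type*} [NonAssocSemiring R]
    [DecidableRel G.Adj] (i : ℕ) (x w : V) :
    (G.distMatrix R i * G.adjMatrix R) x w = Nat.card {z | G.Adj w z ∧ G.dist x z = i} := by
  classical
  simp [Matrix.mul_apply, distMatrix, adjMatrix_apply, G.adj_comm w, Nat.card_eq_fintype_card,
    Fintype.card_subtype, ← ite_and, Finset.sum_boole, and_comm]

theorem adj_of_adj_of_commonNeighbors_subsingleton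
    (huniq : ∀ y w, G.dist y w = 2 → (G.commonNeighbors y w).Subsingleton) {x y z w : V}
    (hxy : G.Adj x y) (hxz : G.Adj x z) (hxw : G.Adj x w) (hyz : G.Adj y z) (hzw : G.Adj z w)
    (hyw : y ≠ w) : G.Adj y w := by
  by_contra hnyw
  have hdist : G.dist y w = 2 := by
    have hle : G.dist y w ≤ 2 := dist_le (.cons hyz (.cons hzw .nil))
    have hpos : 0 < G.dist y w := (hyz.reachable.trans hzw.reachable).pos_dist_of_ne hyw
    have hne : G.dist y w ≠ 1 := fun h => hnyw (dist_eq_one_iff_adj.1 h)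
    omega
  exact hxz.ne (huniq y w hdist (G.mem_commonNeighbors.2 ⟨hxy.symm, hxw.symm⟩)
    (G.mem_commonNeighbors.2 ⟨hyz, hzw.symm⟩))

def localCliqueSetoid (huniq : ∀ y w, G.dist y w = 2 → (G.commonNeighbors y w).Subsingleton)
    (x : V) : Setoid (G.neighborSet x) where
  r y z := (y : V) = z ∨ G.Adj y z
  iseqv :=
    { refl := fun _ => Or.inl rfl
      symm := fun
        | .inl h => .inl h.symm
        | .inr h => .inr h.symm
      trans := by
        rintro ⟨y, hy⟩ ⟨z, hz⟩ ⟨w, hw⟩ hyz hzw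
        dsimp only at hyz hzw ⊢
        rcases hyz with rfl | hyz
        · exact hzw
        rcases hzw with rfl | hzw
        · exact .inr hyz
        exact or_iff_not_imp_left.2
          (adj_of_adj_of_commonNeighbors_subsingleton huniq hy hz hw hyz hzw) }

end SimpleGraph

namespace IsDRG

variable {V : Type*} [Fintype V] {G : SimpleGraph V} {D : ℕ} {b c a : ℕ → ℕ}

theorem natCard_neighborSet (hG : IsDRG G D b c a) (x : V) :
    Nat.card (G.neighborSet x) = b 0 := by
  rw [← hG.card_b 0 (Nat.zero_le D) x x G.dist_self]
  simp only [zero_add, dist_eq_one_iff_adj, and_self]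
  rfl

theorem commonNeighbors_subsingleton (hG : IsDRG G D b c a) (hD : 2 ≤ D) (hc2 : c 2 = 1)
    (y w : V) (h : G.dist y w = 2) : (G.commonNeighbors y w).Subsingleton := by
  have hcard := hG.card_c 2 hD y w h
  rw [hc2, Nat.card_coe_set_eq, Set.ncard_eq_one] at hcard
  obtain ⟨u, hu⟩ := hcard
  have : G.commonNeighbors y w = {u} := by
    rw [← hu]
    ext z
    simp [mem_commonNeighbors, and_comm, G.adj_comm w]
  exact this ▸ Set.subsingleton_singleton

theorem natCard_localClique (hG : IsDRG G D b c a) (hD : 1 ≤ D) {x : V} (y : G.neighborSet x) :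
    Nat.card {z : G.neighborSet x // (y : V) = z ∨ G.Adj y z} = a 1 + 1 := by
  have hclique : {z | G.Adj x z ∧ ((y : V) = z ∨ G.Adj y z)} =
      insert (y : V) {z | G.Adj y z ∧ G.dist x z = 1} := by
    ext z
    simp only [Set.mem_ofPred_eq, Set.mem_insert_iff, dist_eq_one_iff_adj]
    have := y.2
    aesop
  have e : {z : G.neighborSet x // (y : V) = z ∨ G.Adj y z} ≃
      {z | G.Adj x z ∧ ((y : V) = z ∨ G.Adj y z)} :=
    Equiv.subtypeSubtypeEquivSubtypeInter (G.Adj x) fun z => (y : V) = z ∨ G.Adj y z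
  rw [Nat.card_congr e, hclique, Nat.card_coe_set_eq,
    Set.ncard_insert_of_notMem (fun h => G.irrefl h.1), ← Nat.card_coe_set_eq,
    hG.card_a 1 hD x y (dist_eq_one_iff_adj.2 y.2)]

theorem succ_a_one_dvd_b_zero (hG : IsDRG G D b c a) (hD : 2 ≤ D) (hc2 : c 2 = 1) :
    a 1 + 1 ∣ b 0 := by
  obtain ⟨x⟩ := hG.connected.nonempty
  rw [← hG.natCard_neighborSet x]
  exact (localCliqueSetoid (hG.commonNeighbors_subsingleton hD hc2) x)
    |>.dvd_natCard_of_forall_natCard_class_eq (hG.natCard_localClique (by omega))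

theorem natCard_adj_dist_succ (hG : IsDRG G D b c a) {i : ℕ} (hi : i + 1 ≤ D) (x w : V) :
    Nat.card {z | G.Adj w z ∧ G.dist x z = i + 1} =
      (if G.dist x w = i then b i else 0) + (if G.dist x w = i + 1 then a (i + 1) else 0) +
        (if G.dist x w = i + 2 then c (i + 2) else 0) := by
  by_cases h₀ : G.dist x w = i
  · rw [if_pos h₀, if_neg (by omega), if_neg (by omega), hG.card_b i (by omega) x w h₀,
      add_zero, add_zero]
  by_cases h₁ : G.dist x w = i + 1
  · rw [if_neg h₀, if_pos h₁, if_neg (by omega), hG.card_a (i + 1) hi x w h₁,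
      zero_add, add_zero]
  by_cases h₂ : G.dist x w = i + 2
  · rw [if_neg h₀, if_neg h₁, if_pos h₂, 
      ← hG.card_c (i + 2) (h₂ ▸ hG.le_diam x w) x w h₂, zero_add, zero_add]
    rfl
  rw [if_neg h₀, if_neg h₁, if_neg h₂, Nat.card_coe_set_eq, Set.ncard_eq_zero,
    Set.eq_empty_iff_forall_notMem]
  rintro z ⟨hwz, hxz⟩
  have := hwz.symm.diff_dist_adj (u := x)
  omega

theorem distMatrix_succ_mul_adjMatrix {R : Type*} [NonAssocSemiring R] [DecidableRel G.Adj]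
    (hG : IsDRG G D b c a) {i : ℕ} (hi : i + 1 ≤ D) :
    G.distMatrix R (i + 1) * G.adjMatrix R =
      b i • G.distMatrix R i + a (i + 1) • G.distMatrix R (i + 1) +
        c (i + 2) • G.distMatrix R (i + 2) := by
  ext x w
  rw [distMatrix_mul_adjMatrix_apply, hG.natCard_adj_dist_succ hi]
  simp [distMatrix]

theorem distMatrix_eq_zero {R : Type*} [Zero R] [One R] (hG : IsDRG G D b c a) {i : ℕ}
    (hi : D < i) : G.distMatrix R i = 0 := by
  ext x z
  simp [distMatrix, (hG.le_diam x z).trans_lt hi |>.ne]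

theorem b_pred_ne_zero (hG : IsDRG G D b c a) (hD : 0 < D) : b (D - 1) ≠ 0 := by
  obtain ⟨x, w, hxw⟩ := hG.exists_diam
  obtain ⟨p, hp⟩ := hG.connected.exists_walk_length_eq_dist w x
  have hp_nil : ¬p.Nil := Walk.not_nil_iff_lt_length.2 (by rw [hp, dist_comm]; omega)
  have hwy : G.Adj w (p.getVert 1) := p.adj_snd hp_nil
  have hxy : G.dist x (p.getVert 1) = D - 1 := by
    have hle : G.dist (p.getVert 1) x ≤ p.tail.length := dist_le p.tail
    have htail := p.length_tail_add_one hp_nil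
    have hge : G.dist x w ≤ G.dist x (p.getVert 1) + G.dist (p.getVert 1) w :=
      hG.connected.dist_triangle
    rw [dist_comm] at hp hle
    rw [dist_eq_one_iff_adj.2 hwy.symm] at hge
    omega
  rw [← hG.card_b (D - 1) (by omega) x _ hxy, Nat.card_ne_zero]
  exact ⟨⟨w, hwy.symm, by omega⟩, inferInstance⟩

theorem b_zero_eq_of_mulVec_eq_a_three [DecidableEq V] [DecidableRel G.Adj] {K : Type*}
    [Field K] [CharZero K] (hG : IsDRG G 3 b c a) {v : V → K} (hv : v ≠ 0)
    (hAv : G.adjMatrix K *ᵥ v = (a 3 : K) • v) : (b 0 : K) = a 3 * (a 3 - a 1) := by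
  have hrow : ∀ i,
      (G.distMatrix K i * G.adjMatrix K) *ᵥ v = (a 3 : K) • G.distMatrix K i *ᵥ v :=
    fun i => by rw [← mulVec_mulVec, hAv, mulVec_smul]
  have hA₂ : G.distMatrix K 2 *ᵥ v = 0 := by
    have h := hrow 3
    rw [hG.distMatrix_succ_mul_adjMatrix (i := 2) le_rfl,
      hG.distMatrix_eq_zero (i := 2 + 2) (by norm_num)] at h
    simp only [add_mulVec, smul_mulVec, zero_mulVec, ← Nat.cast_smul_eq_nsmul K,
      Nat.reduceAdd] at h
    have hb₂ : (b 2 : K) ≠ 0 := Nat.cast_ne_zero.2 (hG.b_pred_ne_zero three_pos)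
    exact (smul_eq_zero.1 (by linear_combination (norm := module) h)).resolve_left hb₂
  have h := hrow 1
  rw [hG.distMatrix_succ_mul_adjMatrix (i := 0) (by norm_num), distMatrix_zero hG.connected,
    distMatrix_one] at h
  simp only [add_mulVec, smul_mulVec, one_mulVec, hAv, hA₂, ← Nat.cast_smul_eq_nsmul K,
    Nat.reduceAdd] at h
  have hquad : ((a 3 : K) * (a 3 - a 1) - b 0) • v = 0 := by
    linear_combination (norm := module) -h
  linear_combination -(smul_eq_zero.1 hquad).resolve_right hv

end IsDRG

/-- A Shilla distance-regular graph with `c₂ = 1` and `b(Γ) = a₃ - a₁ = 2` has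
`(a₁ + 1) ∣ k` and `a₃ ∈ {2, 3}`. -/
theorem stmt19 {V : Type*} [Fintype V] [DecidableEq V] (G : SimpleGraph V)
    [DecidableRel G.Adj] (b c a : ℕ → ℕ) (hG : IsShilla G b c a)
    (hc2 : c 2 = 1) (hβ : a 3 = a 1 + 2) :
    (a 1 + 1) ∣ b 0 ∧ (a 3 = 2 ∨ a 3 = 3) := by
  obtain ⟨v, hv, hAv⟩ := hG.second.1
  have hk : b 0 = 2 * (a 1 + 2) := by
    have hk : (b 0 : ℝ) = 2 * (a 1 + 2) := by
      rw [hG.drg.b_zero_eq_of_mulVec_eq_a_three hv hAv, hβ]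
      push_cast
      ring
    exact_mod_cast hk
  have hdvd : a 1 + 1 ∣ b 0 := hG.drg.succ_a_one_dvd_b_zero (by norm_num) hc2
  have hdvd_two : a 1 + 1 ∣ 2 := by
    rw [hk, show 2 * (a 1 + 2) = 2 * (a 1 + 1) + 2 by ring] at hdvd
    exact (Nat.dvd_add_right (dvd_mul_left _ _)).1 hdvd
  have := Nat.le_of_dvd two_pos hdvd_two
  exact ⟨hdvd, by omega⟩
end
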